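/- Let (X,d) be a metric space and f : X → X continuous. Then f is topologically transitive and periodically dense if and only if the induced map F_f : g ↦ f ∘ g on C(X,X) is lightly chaotic with respect to the canonical subbase {[{x},G] : x ∈ X, G ⊆ X open} of the point-open topology. -/
import Mathlib

lemma comp_iter_apply {X : Type*} [MetricSpace X] (f : C(X, X)) :
    ∀ (k : ℕ) (g : C(X, X)) (x : X),
      ((fun g : C(X, X) => f.comp g)^[k] g) x = (⇑f)^[k] (g x) := by
  intro k
  induction k with
  | zero => intro g x; simp
  | succ n ih =>
    intro g x
    rw [Function.iterate_succ_apply', Function.iterate_succ_apply']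
    simp [ih]

theorem stmt10 {X : Type*} [MetricSpace X] (f : C(X, X)) :
    ((∀ U V : Set X, IsOpen U → IsOpen V → U.Nonempty → V.Nonempty →
        ∃ k ≥ 1, ((⇑f)^[k] '' U ∩ V).Nonempty) ∧
      Dense {x : X | ∃ k ≥ 1, (⇑f)^[k] x = x}) ↔
    ((∀ (x₁ : X) (G₁ : Set X) (x₂ : X) (G₂ : Set X), IsOpen G₁ → IsOpen G₂ →
        {g : C(X, X) | g x₁ ∈ G₁}.Nonempty → {g : C(X, X) | g x₂ ∈ G₂}.Nonempty →
        ∃ k ≥ 1, ((fun g : C(X, X) => f.comp g)^[k] '' {g : C(X, X) | g x₁ ∈ G₁}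
          ∩ {g : C(X, X) | g x₂ ∈ G₂}).Nonempty) ∧
      (∀ (x : X) (G : Set X), IsOpen G → {g : C(X, X) | g x ∈ G}.Nonempty →
        ∃ g : C(X, X), g x ∈ G ∧ ∃ k ≥ 1, (fun g : C(X, X) => f.comp g)^[k] g = g)) := by
  constructor
  · rintro ⟨htrans, hdense⟩
    constructor
    · intro x₁ G₁ x₂ G₂ hG₁ hG₂ ⟨g₁, hg₁⟩ ⟨g₂, hg₂⟩
      obtain ⟨k, hk, y, ⟨z, hzG₁, hzy⟩, hyG₂⟩ :=
        htrans G₁ G₂ hG₁ hG₂ ⟨g₁ x₁, hg₁⟩ ⟨g₂ x₂, hg₂⟩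
      refine ⟨k, hk, ContinuousMap.const X y, ⟨ContinuousMap.const X z, hzG₁, ?_⟩, ?_⟩
      · ext t; rw [comp_iter_apply]; exact hzy
      · exact hyG₂
    · intro x G hG ⟨g₀, hg₀⟩
      obtain ⟨p, ⟨k, hk, hp⟩, hpG⟩ :=
        hdense.exists_mem_open hG ⟨g₀ x, hg₀⟩
      refine ⟨ContinuousMap.const X p, hpG, k, hk, ?_⟩
      ext t; rw [comp_iter_apply]; exact hp
  · rintro ⟨htrans, hper⟩
    constructor
    · intro U V hU hV ⟨u, hu⟩ ⟨v, hv⟩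
      obtain ⟨k, hk, g', ⟨g, hgU, hgg'⟩, hg'V⟩ :=
        htrans u U u V hU hV ⟨ContinuousMap.const X u, hu⟩ ⟨ContinuousMap.const X v, hv⟩
      refine ⟨k, hk, g' u, ⟨g u, hgU, ?_⟩, hg'V⟩
      rw [← hgg', comp_iter_apply]
    · rw [dense_iff_inter_open]
      intro G hG ⟨y, hy⟩
      obtain ⟨g, hgG, k, hk, hfix⟩ :=
        hper y G hG ⟨ContinuousMap.const X y, hy⟩
      refine ⟨g y, hgG, k, hk, ?_⟩
      rw [← comp_iter_apply, hfix]
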